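/- Let (B,‖·‖) be a Banach space such that ‖·‖^p / p is (γ,p)-uniformly smooth for some 1 < p ≤ 2, and let z be a B-valued tree of depth T with ‖z_t(ε)‖ ≤ R for all t, ε. Then for i.i.d. Rademacher ε_1,...,ε_T, E[‖(1/T) Σ_{t=1}^T ε_t z_t(ε)‖] ≤ γ^{1/p} R / T^{1−1/p}. -/

import Mathlib

/-!
Let `S_k = ∑_{t<k} ε_t z_t(ε)`. Since `z_k` only depends on `ε_0, …, ε_{k-1}`, the linear term
`⟨∇(‖·‖^p/p)(S_k), ε_k z_k⟩` in the smoothness inequality for `S_{k+1} = S_k + ε_k z_k` averages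
to zero over the sign `ε_k`, so `E‖S_{k+1}‖^p ≤ E‖S_k‖^p + γ R^p` and hence `E‖S_T‖^p ≤ γ T R^p`.
Jensen's inequality then gives `E‖S_T‖ ≤ (γ T R^p)^{1/p}`; divide by `T`.
-/

open Finset Function
open scoped BigOperators

section UniformlySmooth

variable {B : Type*} [NormedAddCommGroup B] [NormedSpace ℝ B]

def IsUniformlySmooth (G : B → ℝ) (D : B → B →L[ℝ] ℝ) (γ p : ℝ) : Prop :=
  ∀ x y, G x ≤ G y + D y (x - y) + γ / p * ‖x - y‖ ^ p

theorem IsUniformlySmooth.norm_add_rpow_le {D : B → B →L[ℝ] ℝ} {γ p : ℝ} (hp : 0 < p)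
    (h : IsUniformlySmooth (fun x => ‖x‖ ^ p / p) D γ p) (x v : B) :
    ‖x + v‖ ^ p ≤ ‖x‖ ^ p + p * D x v + γ * ‖v‖ ^ p := by
  have hxv := h (x + v) x
  rw [add_sub_cancel_left] at hxv
  have := mul_le_mul_of_nonneg_left hxv hp.le
  field_simp at this
  linarith

end UniformlySmooth

def rademacherSign (b : Bool) : ℝ := if b then 1 else -1

@[simp]
theorem rademacherSign_not (b : Bool) : rademacherSign (!b) = -rademacherSign b := by
  cases b <;> simp [rademacherSign]

@[simp]
theorem abs_rademacherSign (b : Bool) : |rademacherSign b| = 1 := by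
  cases b <;> simp [rademacherSign]

theorem expect_rademacherSign_mul_eq_zero {ι : Type*} [Fintype ι] [DecidableEq ι] (j : ι)
    {g : (ι → Bool) → ℝ} (hg : ∀ ε, g (update ε j (!ε j)) = g ε) :
    𝔼 ε, rademacherSign (ε j) * g ε = 0 := by
  have hflip : Involutive fun ε : ι → Bool => update ε j (!ε j) := by
    intro ε
    ext i
    rcases eq_or_ne i j with rfl | hij
    · simp
    · simp [hij]
  have h := Fintype.expect_bijective _ hflip.bijective
    (fun ε => rademacherSign (update ε j (!ε j) j) * g (update ε j (!ε j)))
    (fun ε => rademacherSign (ε j) * g ε) fun _ => rfl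
  simp only [update_self, rademacherSign_not, hg, neg_mul, expect_neg_distrib] at h
  linarith

theorem expect_le_rpow_expect_rpow {ι : Type*} [Fintype ι] [Nonempty ι] {f : ι → ℝ}
    (hf : ∀ i, 0 ≤ f i) {p : ℝ} (hp : 1 ≤ p) :
    𝔼 i, f i ≤ (𝔼 i, f i ^ p) ^ p⁻¹ := by
  simpa using
    Real.compact_inner_le_weight_mul_Lp_of_nonneg univ hp (w := 1) (fun _ => zero_le_one) hf

section RademacherTree

variable {X : Type*} {T : ℕ}

/-- A tree `z_t : {±1}^{t-1} → X` of depth `T`, encoded as a function of all `T` signs that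
ignores `ε s` for `s ≥ t`. -/
def IsPredictable (z : Fin T → (Fin T → Bool) → X) : Prop :=
  ∀ t ε ε', (∀ s, s < t → ε s = ε' s) → z t ε = z t ε'

theorem IsPredictable.apply_update_of_le {z : Fin T → (Fin T → Bool) → X} (hz : IsPredictable z)
    {t j : Fin T} (htj : t ≤ j) (ε : Fin T → Bool) (b : Bool) : z t (update ε j b) = z t ε :=
  hz t _ _ fun _ hs => update_of_ne (hs.trans_le htj).ne _ _

variable [AddCommMonoid X] [Module ℝ X]

def partialSum (z : Fin T → (Fin T → Bool) → X) (k : ℕ) (ε : Fin T → Bool) : X :=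
  ∑ t : Fin T with t.val < k, rademacherSign (ε t) • z t ε

variable {z : Fin T → (Fin T → Bool) → X}

@[simp]
theorem partialSum_zero (ε : Fin T → Bool) : partialSum z 0 ε = 0 := by
  simp [partialSum]

theorem partialSum_succ (j : Fin T) (ε : Fin T → Bool) :
    partialSum z (j + 1) ε = partialSum z j ε + rademacherSign (ε j) • z j ε := by
  have hfilter : univ.filter (fun t : Fin T => (t : ℕ) < j + 1)
      = insert j (univ.filter fun t : Fin T => (t : ℕ) < j) := by
    ext t
    simp only [mem_filter, mem_univ, true_and, mem_insert, Fin.ext_iff]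
    omega
  rw [partialSum, hfilter, sum_insert (by simp), add_comm, partialSum]

theorem partialSum_self (ε : Fin T → Bool) :
    partialSum z T ε = ∑ t, rademacherSign (ε t) • z t ε := by
  simp [partialSum]

theorem IsPredictable.partialSum_update (hz : IsPredictable z) (j : Fin T) (ε : Fin T → Bool)
    (b : Bool) : partialSum z j (update ε j b) = partialSum z j ε := by
  refine sum_congr rfl fun t ht => ?_
  have htj : t < j := Fin.lt_def.mpr (mem_filter.mp ht).2
  rw [update_of_ne htj.ne, hz.apply_update_of_le htj.le]

variable {B : Type*} [NormedAddCommGroup B] [NormedSpace ℝ B] {z : Fin T → (Fin T → Bool) → B}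

theorem expect_norm_partialSum_succ_rpow_le {D : B → B →L[ℝ] ℝ} {γ p : ℝ} (hp : 0 < p)
    (hsmooth : IsUniformlySmooth (fun x => ‖x‖ ^ p / p) D γ p) (hz : IsPredictable z)
    (j : Fin T) :
    𝔼 ε, ‖partialSum z (j + 1) ε‖ ^ p ≤ 𝔼 ε, ‖partialSum z j ε‖ ^ p + γ * 𝔼 ε, ‖z j ε‖ ^ p := by
  have hlinear : 𝔼 ε, D (partialSum z j ε) (rademacherSign (ε j) • z j ε) = 0 := by
    simp only [map_smul, smul_eq_mul]
    exact expect_rademacherSign_mul_eq_zero j fun ε => by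
      rw [hz.partialSum_update, hz.apply_update_of_le le_rfl]
  calc 𝔼 ε, ‖partialSum z (j + 1) ε‖ ^ p
      ≤ 𝔼 ε, (‖partialSum z j ε‖ ^ p
          + p * D (partialSum z j ε) (rademacherSign (ε j) • z j ε) + γ * ‖z j ε‖ ^ p) := by
        refine expect_le_expect fun ε _ => ?_
        simpa [partialSum_succ, norm_smul] using
          hsmooth.norm_add_rpow_le hp (partialSum z j ε) (rademacherSign (ε j) • z j ε)
    _ = _ := by
      rw [expect_add_distrib, expect_add_distrib, ← mul_expect, ← mul_expect, hlinear,
        mul_zero, add_zero]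

theorem expect_norm_partialSum_rpow_le {D : B → B →L[ℝ] ℝ} {γ p R : ℝ} (hp : 0 < p)
    (hsmooth : IsUniformlySmooth (fun x => ‖x‖ ^ p / p) D γ p) (hz : IsPredictable z)
    (hγ : 0 ≤ γ) (hbd : ∀ t ε, ‖z t ε‖ ≤ R) :
    ∀ k ≤ T, 𝔼 ε, ‖partialSum z k ε‖ ^ p ≤ k * (γ * R ^ p) := by
  intro k
  induction k with
  | zero => simp [Real.zero_rpow hp.ne']
  | succ k ih =>
    intro hk
    have hstep := expect_norm_partialSum_succ_rpow_le hp hsmooth hz ⟨k, hk⟩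
    have hzbd : 𝔼 ε, ‖z ⟨k, hk⟩ ε‖ ^ p ≤ R ^ p :=
      expect_le univ_nonempty fun ε _ => Real.rpow_le_rpow (norm_nonneg _) (hbd _ ε) hp.le
    push_cast
    nlinarith [ih (by omega), mul_le_mul_of_nonneg_left hzbd hγ]

end RademacherTree

theorem stmt_15_general {B : Type*} [NormedAddCommGroup B] [NormedSpace ℝ B]
    (T : ℕ) (p γ R : ℝ) (hp : 1 < p) (hγ : 0 ≤ γ) (hR : 0 ≤ R)
    (D : B → (B →L[ℝ] ℝ))
    (hsmooth : ∀ x y : B, ‖x‖ ^ p / p ≤ ‖y‖ ^ p / p + D y (x - y) + γ / p * ‖x - y‖ ^ p)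
    (z : Fin T → (Fin T → Bool) → B)
    (htree : ∀ (t : Fin T) (ε ε' : Fin T → Bool),
      (∀ s : Fin T, s < t → ε s = ε' s) → z t ε = z t ε')
    (hbd : ∀ t ε, ‖z t ε‖ ≤ R) :
    (∑ ε : Fin T → Bool, ‖(T : ℝ)⁻¹ • ∑ t, (if ε t then (1:ℝ) else -1) • z t ε‖) / 2 ^ T
      ≤ γ ^ (1 / p) * R / (T : ℝ) ^ (1 - 1 / p) := by
  rcases Nat.eq_zero_or_pos T with rfl | hT
  · simp only [CharP.cast_eq_zero, inv_zero, zero_smul, norm_zero, sum_const_zero, zero_div]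
    positivity
  have hp0 : 0 < p := by linarith
  have hT' : (0 : ℝ) < T := by exact_mod_cast hT
  have hmoment := expect_norm_partialSum_rpow_le hp0 hsmooth htree hγ hbd T le_rfl
  have hjensen := expect_le_rpow_expect_rpow (fun ε => norm_nonneg (partialSum z T ε)) hp.le
  calc (∑ ε : Fin T → Bool, ‖(T : ℝ)⁻¹ • ∑ t, (if ε t then (1:ℝ) else -1) • z t ε‖) / 2 ^ T
      = (T : ℝ)⁻¹ * 𝔼 ε, ‖partialSum z T ε‖ := by
        simp [Fintype.expect_eq_sum_div_card, partialSum_self, rademacherSign, norm_smul,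
          ← Finset.mul_sum, mul_div_assoc]
    _ ≤ (T : ℝ)⁻¹ * (T * (γ * R ^ p)) ^ p⁻¹ := by
        gcongr
        exact hjensen.trans (by gcongr)
    _ = γ ^ (1 / p) * R / (T : ℝ) ^ (1 - 1 / p) := by
        rw [Real.mul_rpow hT'.le (by positivity), Real.mul_rpow hγ (by positivity),
          Real.rpow_rpow_inv hR hp0.ne', Real.rpow_sub hT', Real.rpow_one, one_div]
        field_simp

/-- In a `(γ,p)`-smooth Banach space (i.e. `‖·‖^p/p` is `(γ,p)`-uniformly smooth,
witnessed by gradients `D`), for a `B`-valued tree `z` of depth `T` with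
`‖z_t(ε)‖ ≤ R` and i.i.d. Rademacher signs,
`E‖(1/T) ∑ₜ εₜ zₜ(ε)‖ ≤ γ^{1/p} R / T^{1−1/p}`. -/
theorem stmt_15 {B : Type*} [NormedAddCommGroup B] [NormedSpace ℝ B]
    (T : ℕ) (p γ R : ℝ) (hp : 1 < p) (hp2 : p ≤ 2) (hγ : 0 ≤ γ) (hR : 0 ≤ R)
    (D : B → (B →L[ℝ] ℝ))
    (hsmooth : ∀ x y : B, ‖x‖ ^ p / p ≤ ‖y‖ ^ p / p + D y (x - y) + γ / p * ‖x - y‖ ^ p)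
    (z : Fin T → (Fin T → Bool) → B)
    (htree : ∀ (t : Fin T) (ε ε' : Fin T → Bool),
      (∀ s : Fin T, s < t → ε s = ε' s) → z t ε = z t ε')
    (hbd : ∀ t ε, ‖z t ε‖ ≤ R) :
    (∑ ε : Fin T → Bool, ‖(T : ℝ)⁻¹ • ∑ t, (if ε t then (1:ℝ) else -1) • z t ε‖) / 2 ^ T
      ≤ γ ^ (1 / p) * R / (T : ℝ) ^ (1 - 1 / p) :=
  stmt_15_general T p γ R hp hγ hR D hsmooth z htree hbd
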